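/- Let n, n′ ≥ 1 and let (X_k)_{0 ≤ k ≤ n} and (Y_k)_{0 ≤ k ≤ n′} be two independent lazy simple random walks on ℤ started at 0 (each stepping +1 with probability 1/4, −1 with probability 1/4, and 0 with probability 1/2, independently). Let N = |{j : 1 ≤ j ≤ n, X_j = 0 and X_i ≥ 0 for all 0 ≤ i < j}| and N′ = |{j : 1 ≤ j ≤ n′, Y_j = 0 and Y_i ≥ 0 for all 0 ≤ i < j}|. Then for every natural number m, the probability that N + N′ ≥ m is at most 2·(3/4)^{m/2}. -/

import Mathlib

/-!
First-step analysis. At height `0` a step `-1` puts the walk below `0`, after which no return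
with nonnegative history is possible, so each return to `0` costs a factor `3/4`. Conditioning
on the first step gives `P[N ≥ k] ≤ (3/4)^k` by induction on the length of the walk, provided
the induction is run for walks started at every height. Finally `N + N' ≥ m` forces
`N ≥ ⌈m/2⌉` or `N' ≥ ⌈m/2⌉`.
-/

/-- The step of the lazy simple random walk: `+1`, `−1`, `0`, `0`. -/
def lazyStep : Fin 4 → ℤ := ![1, -1, 0, 0]

/-- The lazy simple random walk after `k` steps, driven by `ω : Fin n → Fin 4`:
`X_k(ω) = ∑_{i < k} lazyStep (ω i)`. -/
def lazyWalk (n : ℕ) (ω : Fin n → Fin 4) (k : ℕ) : ℤ :=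
  ∑ i ∈ Finset.univ.filter (fun i : Fin n => (i : ℕ) < k), lazyStep (ω i)

/-- The number of times `j ∈ {1,…,n}` at which the walk returns to `0` with
nonnegative history. -/
def returnsCount (n : ℕ) (ω : Fin n → Fin 4) : ℕ :=
  ((Finset.Icc 1 n).filter (fun j =>
    lazyWalk n ω j = 0 ∧ ∀ i < j, 0 ≤ lazyWalk n ω i)).card

open Finset

lemma card_filter_Icc_one_succ (n : ℕ) (P : ℕ → Prop) [DecidablePred P] :
    ((Icc 1 (n + 1)).filter P).card =
      (if P 1 then 1 else 0) + ((Icc 1 n).filter fun j => P (j + 1)).card := by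
  rw [← map_add_right_Icc 0 n 1, filter_map, card_map,
    ← insert_Icc_add_one_left_eq_Icc (Nat.zero_le n), filter_insert]
  have h : (P ∘ addRightEmbedding 1) 0 ↔ P 1 := by simp
  simp only [h, zero_add]
  split_ifs
  · rw [card_insert_of_notMem (by simp), add_comm]; rfl
  · rw [zero_add]; rfl

lemma card_filter_piFin_succ {α : Type*} [Fintype α] (n : ℕ) (P : (Fin (n + 1) → α) → Prop)
    [DecidablePred P] :
    (univ.filter P).card = ∑ a : α, (univ.filter fun ω : Fin n → α => P (Fin.cons a ω)).card := by
  simp only [card_filter]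
  rw [← (Fin.consEquiv fun _ => α).sum_comp, Fintype.sum_prod_type]
  rfl

lemma card_filter_le_add_le {α β : Type*} [Fintype α] [Fintype β] (f : α → ℕ) (g : β → ℕ)
    {m k : ℕ} (hmk : 2 * k ≤ m + 1) :
    (univ.filter fun p : α × β => m ≤ f p.1 + g p.2).card ≤
      (univ.filter fun a => k ≤ f a).card * Fintype.card β +
        Fintype.card α * (univ.filter fun b => k ≤ g b).card := by
  classical
  calc _ ≤ ((univ.filter fun a => k ≤ f a) ×ˢ (univ : Finset β) ∪
        (univ : Finset α) ×ˢ (univ.filter fun b => k ≤ g b)).card := by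
        refine card_le_card fun p hp => ?_
        simp only [mem_filter, mem_univ, true_and, and_true, mem_union, mem_product] at hp ⊢
        omega
    _ ≤ _ := (card_union_le _ _).trans_eq (by rw [card_product, card_product, card_univ, card_univ])

@[simp]
lemma lazyWalk_zero (n : ℕ) (ω : Fin n → Fin 4) : lazyWalk n ω 0 = 0 := by
  simp [lazyWalk]

lemma lazyWalk_cons_succ (n : ℕ) (a : Fin 4) (ω : Fin n → Fin 4) (j : ℕ) :
    lazyWalk (n + 1) (Fin.cons a ω) (j + 1) = lazyStep a + lazyWalk n ω j := by
  simp [lazyWalk, sum_filter, Fin.sum_univ_succ]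

/-- `returnsCount` for the walk `h + X` started at height `h`. -/
def returnsCountFrom (h : ℤ) (n : ℕ) (ω : Fin n → Fin 4) : ℕ :=
  ((Icc 1 n).filter fun j => h + lazyWalk n ω j = 0 ∧ ∀ i < j, 0 ≤ h + lazyWalk n ω i).card

lemma returnsCount_eq_returnsCountFrom_zero (n : ℕ) (ω : Fin n → Fin 4) :
    returnsCount n ω = returnsCountFrom 0 n ω := by
  simp [returnsCount, returnsCountFrom]

lemma returnsCountFrom_of_neg {h : ℤ} (hh : h < 0) (n : ℕ) (ω : Fin n → Fin 4) :
    returnsCountFrom h n ω = 0 := by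
  rw [returnsCountFrom, card_eq_zero, filter_eq_empty_iff]
  intro j hj ⟨_, hpos⟩
  have h0 := hpos 0 (mem_Icc.mp hj).1
  rw [lazyWalk_zero, add_zero] at h0
  omega

lemma returnsCountFrom_cons {h : ℤ} (hh : 0 ≤ h) (n : ℕ) (a : Fin 4) (ω : Fin n → Fin 4) :
    returnsCountFrom h (n + 1) (Fin.cons a ω) =
      (if h + lazyStep a = 0 then 1 else 0) + returnsCountFrom (h + lazyStep a) n ω := by
  have hwalk (j : ℕ) : h + lazyWalk (n + 1) (Fin.cons a ω) (j + 1) =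
      h + lazyStep a + lazyWalk n ω j := by
    rw [lazyWalk_cons_succ, add_assoc]
  rw [returnsCountFrom, card_filter_Icc_one_succ, returnsCountFrom]
  simp only [Nat.forall_lt_succ_left, lazyWalk_zero, add_zero, hh, true_and, hwalk, not_lt_zero,
    IsEmpty.forall_iff, implies_true, and_true]

/-- Started away from `0`, the first return to `0` comes without the factor `3 / 4`, which is
paid at every later one. -/
noncomputable def returnWeight (h : ℤ) : ℝ := if h = 0 then 1 else 4 / 3

lemma one_le_returnWeight (h : ℤ) : 1 ≤ returnWeight h := by
  unfold returnWeight; split_ifs <;> norm_num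

lemma card_returnsCountFrom_ge_succ_le {n k : ℕ} (h : ℤ)
    (hstep : ∀ h' : ℤ, ((univ.filter fun ω : Fin n → Fin 4 =>
      k + 1 ≤ (if h' = 0 then 1 else 0) + returnsCountFrom h' n ω).card : ℝ) ≤
        (3 / 4) ^ k * 4 ^ n) :
    ((univ.filter fun ω : Fin (n + 1) → Fin 4 => k + 1 ≤ returnsCountFrom h (n + 1) ω).card : ℝ) ≤
      returnWeight h * (3 / 4) ^ (k + 1) * 4 ^ (n + 1) := by
  rcases lt_or_ge h 0 with hneg | hnonneg
  · simp only [returnsCountFrom_of_neg hneg]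
    simp only [nonpos_iff_eq_zero, Nat.add_one_ne_zero, filter_false, card_empty, Nat.cast_zero]
    unfold returnWeight
    positivity
  rw [card_filter_piFin_succ]
  simp only [returnsCountFrom_cons hnonneg]
  push_cast
  unfold returnWeight
  split_ifs with h0
  · subst h0
    have hdown : ((univ.filter fun ω : Fin n → Fin 4 =>
        k + 1 ≤ (if (0 : ℤ) + lazyStep 1 = 0 then 1 else 0) +
          returnsCountFrom (0 + lazyStep 1) n ω).card : ℝ) = 0 := by
      simp [lazyStep, returnsCountFrom_of_neg]
    rw [Fin.sum_univ_four, hdown]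
    have : (1 : ℝ) * (3 / 4) ^ (k + 1) * 4 ^ (n + 1) = 3 * ((3 / 4) ^ k * 4 ^ n) := by ring
    linarith [hstep (0 + lazyStep 0), hstep (0 + lazyStep 2), hstep (0 + lazyStep 3)]
  · calc _ ≤ ∑ _ : Fin 4, (3 / 4 : ℝ) ^ k * 4 ^ n := sum_le_sum fun a _ => hstep _
      _ = _ := by simp only [sum_const, card_univ, Fintype.card_fin, nsmul_eq_mul]; ring

theorem card_returnsCountFrom_ge_le (n : ℕ) (h : ℤ) (k : ℕ) :
    ((univ.filter fun ω : Fin n → Fin 4 => k ≤ returnsCountFrom h n ω).card : ℝ) ≤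
      returnWeight h * (3 / 4) ^ k * 4 ^ n := by
  induction n generalizing h k with
  | zero =>
    cases k with
    | zero => simpa using one_le_returnWeight h
    | succ k =>
      simp only [returnsCountFrom, Icc_eq_empty_of_lt zero_lt_one, filter_empty, card_empty,
        nonpos_iff_eq_zero, Nat.add_one_ne_zero, filter_false, Nat.cast_zero]
      unfold returnWeight
      positivity
  | succ n ih =>
    cases k with
    | zero =>
      calc _ ≤ ((univ : Finset (Fin (n + 1) → Fin 4)).card : ℝ) := by
            exact_mod_cast card_filter_le _ _
        _ ≤ returnWeight h * (3 / 4) ^ 0 * 4 ^ (n + 1) := by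
            simpa using one_le_returnWeight h
    | succ k =>
      refine card_returnsCountFrom_ge_succ_le h fun h' => ?_
      by_cases h0 : h' = 0
      · subst h0
        simpa [add_comm 1, Nat.add_le_add_iff_right, returnWeight] using ih 0 k
      · calc _ ≤ _ := by simpa [h0] using ih h' (k + 1)
          _ = (3 / 4 : ℝ) ^ k * 4 ^ n := by simp only [returnWeight, h0, ↓reduceIte]; ring

theorem card_returnsCount_ge_le (n k : ℕ) :
    ((univ.filter fun ω : Fin n → Fin 4 => k ≤ returnsCount n ω).card : ℝ) ≤
      (3 / 4) ^ k * 4 ^ n := by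
  simpa [returnsCount_eq_returnsCountFrom_zero, returnWeight] using card_returnsCountFrom_ge_le n 0 k

theorem two_walks_returns_tail_general (n n' : ℕ) (m : ℕ) :
    ((Finset.univ.filter (fun ω : (Fin n → Fin 4) × (Fin n' → Fin 4) =>
        m ≤ returnsCount n ω.1 + returnsCount n' ω.2)).card : ℝ)
        / (4 ^ n * 4 ^ n')
      ≤ 2 * (3 / 4 : ℝ) ^ ((m : ℝ) / 2) := by
  set k := (m + 1) / 2
  have hsplit := card_filter_le_add_le (returnsCount n) (returnsCount n') (m := m) (k := k)
    (by omega)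
  have hk : (3 / 4 : ℝ) ^ k ≤ (3 / 4 : ℝ) ^ ((m : ℝ) / 2) := by
    rw [← Real.rpow_natCast]
    refine Real.rpow_le_rpow_of_exponent_ge (by norm_num) (by norm_num) ?_
    rw [div_le_iff₀ two_pos]
    exact_mod_cast (show m ≤ k * 2 by omega)
  simp only [Fintype.card_fun, Fintype.card_fin] at hsplit
  rw [div_le_iff₀ (by positivity)]
  calc _ ≤ ((univ.filter fun ω => k ≤ returnsCount n ω).card : ℝ) * 4 ^ n' +
        4 ^ n * (univ.filter fun ω => k ≤ returnsCount n' ω).card := by exact_mod_cast hsplit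
    _ ≤ (3 / 4) ^ k * 4 ^ n * 4 ^ n' + 4 ^ n * ((3 / 4) ^ k * 4 ^ n') := by
        gcongr <;> apply card_returnsCount_ge_le
    _ = 2 * (3 / 4 : ℝ) ^ k * (4 ^ n * 4 ^ n') := by ring
    _ ≤ _ := by gcongr

/-- For two independent lazy simple random walks on `ℤ` started at `0`
(uniform measure on `(Fin 4)ⁿ × (Fin 4)^{n′}`), the probability that the total
number of returns to `0` with nonnegative history, `N + N′`, is at least `m`
is at most `2·(3/4)^{m/2}`. -/
theorem two_walks_returns_tail (n n' : ℕ) (hn : 1 ≤ n) (hn' : 1 ≤ n') (m : ℕ) :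
    ((Finset.univ.filter (fun ω : (Fin n → Fin 4) × (Fin n' → Fin 4) =>
        m ≤ returnsCount n ω.1 + returnsCount n' ω.2)).card : ℝ)
        / (4 ^ n * 4 ^ n')
      ≤ 2 * (3 / 4 : ℝ) ^ ((m : ℝ) / 2) :=
  two_walks_returns_tail_general n n' m
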